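/- Let A be an alphabet (an arbitrary type, possibly infinite), M a finite monoid with idempotent exponent n satisfying the DA identity for n, and β : A* → M a monoid morphism. Then for every m ∈ M, the language {w ∈ A* : β(w) ∼_R m} equals the union over all p ∈ M with p ∼_R m of the concatenations V_p · U_m (where V_p · U_m = {u ++ v : u ∈ V_p, v ∈ U_m}). -/
import Mathlib

/-- Green's right preorder: `m ≤_R m'` iff `m = m' * k` for some `k`. -/
def rLe {M : Type*} [Monoid M] (m m' : M) : Prop := ∃ k, m = m' * k

/-- Green's right equivalence `∼_R`. -/
def rEquiv {M : Type*} [Monoid M] (m m' : M) : Prop := rLe m m' ∧ rLe m' m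

/-- The language `U_m = {w ∈ A* : m·β(w) ∼_R m}`. -/
def Ulang {A M : Type*} [Monoid M] (β : List A → M) (m : M) : Set (List A) :=
  {w | rEquiv (m * β w) m}

/-- The language `V_m`: words `w` with `β(w) = m` such that no proper prefix of `w`
has an image `∼_R`-equivalent to `m`. -/
def Vlang {A M : Type*} [Monoid M] (β : List A → M) (m : M) : Set (List A) :=
  {w | β w = m ∧ ∀ u : List A, u <+: w → u ≠ w → ¬ rEquiv (β u) m}


section Aux
variable {M : Type*} [Monoid M] (n : ℕ)

lemma rot (a b : M) : ∀ k : ℕ, a * (b * a) ^ k = (a * b) ^ k * a := by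
  intro k
  induction k with
  | zero => simp
  | succ k ih =>
    rw [pow_succ, pow_succ, ← mul_assoc, ih]
    simp [mul_assoc]

variable (hidem : ∀ x : M, x ^ n * x ^ n = x ^ n)
  (hDA : ∀ m k : M, (m * k) ^ n * m * (m * k) ^ n = (m * k) ^ n)

include hidem hDA in
lemma aper (x : M) : x ^ (n + 1) = x ^ n := by
  have h := hDA x 1
  simp only [mul_one] at h
  calc x ^ (n+1) = (x ^ n * x ^ n) * x := by rw [hidem, pow_succ]
    _ = x ^ n * (x ^ n * x) := by rw [mul_assoc]
    _ = x ^ n * (x * x ^ n) := by rw [← pow_succ, ← pow_succ']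
    _ = x ^ n * x * x ^ n := by rw [mul_assoc]
    _ = x ^ n := h

include hidem hDA in
lemma suffix_abs (a b : M) : (a * b) ^ n * b * (a * b) ^ n = (a * b) ^ n := by
  have h := hDA b a
  have h2 : (a * b) ^ n * (a * b) * (b * a) ^ n = (a * b) ^ n * a := by
    have e1 : a * ((b * a) ^ n * b * (b * a) ^ n) = (a * (b * a) ^ n) * b * (b * a) ^ n := by
      simp [mul_assoc]
    rw [rot] at e1
    rw [h, rot] at e1
    simpa [mul_assoc] using e1.symm
  have h4 : (a * b) ^ n * (a * b) = (a * b) ^ n := by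
    have := aper n hidem hDA (a * b)
    rw [pow_succ] at this; exact this
  have h5 : (b * a) ^ n * b = b * (a * b) ^ n := by rw [rot]
  calc (a * b) ^ n * b * (a * b) ^ n
      = ((a * b) ^ n * (a * b)) * b * (a * b) ^ n := by rw [h4]
    _ = (a * b) ^ n * (a * b) * ((b * a) ^ n * b) := by rw [h5]; simp [mul_assoc]
    _ = ((a * b) ^ n * (a * b) * (b * a) ^ n) * b := by simp [mul_assoc]
    _ = ((a * b) ^ n * a) * b := by rw [h2]
    _ = (a * b) ^ n * (a * b) := by simp [mul_assoc]
    _ = (a * b) ^ n := h4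

lemma absorb {m w : M} (h : m * w = m) : ∀ k, m * w ^ k = m := by
  intro k
  induction k with
  | zero => simp
  | succ k ih => rw [pow_succ, ← mul_assoc, ih, h]

include hidem hDA in
lemma key_lemma {m a x c : M} (h : m * (a * (x * c)) = m) : ∃ z, m * (x * z) = m := by
  set e : M := ((a * x) * c) ^ n with he_def
  have he : m * e = m := absorb (by simpa [mul_assoc] using h) n
  have habs : e * (a * x) * e = e := hDA (a * x) c
  have h2 : m * (a * (x * e)) = m := by
    calc m * (a * (x * e)) = (m * e) * ((a * x) * e) := by rw [he]; simp [mul_assoc]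
      _ = m * (e * (a * x) * e) := by simp [mul_assoc]
      _ = m * e := by rw [habs]
      _ = m := he
  set E : M := (a * (x * e)) ^ n with hE_def
  have hE : m * E = m := absorb h2 n
  have hsuf : E * (x * e) * E = E := suffix_abs n hidem hDA a (x * e)
  refine ⟨e * E, ?_⟩
  calc m * (x * (e * E)) = (m * E) * ((x * e) * E) := by rw [hE]; simp [mul_assoc]
    _ = m * (E * (x * e) * E) := by simp [mul_assoc]
    _ = m * E := by rw [hsuf]
    _ = m := hE


lemma rEquiv_refl (m : M) : rEquiv m m := ⟨⟨1, (mul_one m).symm⟩, ⟨1, (mul_one m).symm⟩⟩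

lemma rEquiv_symm {a b : M} (h : rEquiv a b) : rEquiv b a := ⟨h.2, h.1⟩

lemma rLe_trans {a b c : M} (h1 : rLe a b) (h2 : rLe b c) : rLe a c := by
  obtain ⟨k, hk⟩ := h1; obtain ⟨k', hk'⟩ := h2
  exact ⟨k' * k, by rw [hk, hk', mul_assoc]⟩

lemma rEquiv_trans {a b c : M} (h1 : rEquiv a b) (h2 : rEquiv b c) : rEquiv a c :=
  ⟨rLe_trans h1.1 h2.1, rLe_trans h2.2 h1.2⟩

include hidem hDA in
lemma transfer {p m x : M} (hpm : rEquiv p m) (hx : rLe m (m * x)) : rLe p (p * x) := by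
  obtain ⟨⟨a, ha⟩, ⟨b, hb⟩⟩ := hpm
  obtain ⟨c, hc⟩ := hx
  have hkey : p * (b * (x * (c * a))) = p := by
    calc p * (b * (x * (c * a))) = (p * b) * (x * (c * a)) := by simp [mul_assoc]
      _ = m * (x * (c * a)) := by rw [← hb]
      _ = ((m * x) * c) * a := by simp [mul_assoc]
      _ = m * a := by rw [← hc]
      _ = p := ha.symm
  obtain ⟨z, hz⟩ := key_lemma n hidem hDA hkey
  exact ⟨z, by rw [mul_assoc]; exact hz.symm⟩

end Aux


/-- Let `β : A* → M` be a monoid morphism into a finite monoid with idempotent exponent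
`n` satisfying the DA identity for `n`. Then
`{w : β(w) ∼_R m} = ⋃_{p ∼_R m} V_p · U_m`. -/
theorem rEquiv_lang_eq_union_vlang_ulang {A M : Type*} [Monoid M] [Finite M]
    (n : ℕ) (hn : 0 < n)
    (hidem : ∀ x : M, x ^ n * x ^ n = x ^ n)
    (hDA : ∀ m k : M, (m * k) ^ n * m * (m * k) ^ n = (m * k) ^ n)
    (β : List A → M) (hβ1 : β [] = 1)
    (hβmul : ∀ u v : List A, β (u ++ v) = β u * β v)
    (m : M) :
    {w : List A | rEquiv (β w) m} =
      {w : List A | ∃ p : M, rEquiv p m ∧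
        ∃ u ∈ Vlang β p, ∃ v ∈ Ulang β m, w = u ++ v} := by
  classical
  ext w
  simp only [Set.mem_setOf_eq]
  constructor
  · intro hw
    have hex : ∃ k : ℕ, ∃ u : List A, u.length = k ∧ u <+: w ∧ rEquiv (β u) m :=
      ⟨w.length, w, rfl, List.prefix_refl w, hw⟩
    obtain ⟨u, hlen, hpre, hequ⟩ := Nat.find_spec hex
    obtain ⟨v, hv⟩ := hpre
    refine ⟨β u, hequ, u, ⟨rfl, ?_⟩, v, ?_, hv.symm⟩
    · intro u' hpre' hne heq'
      have hlt : u'.length < u.length :=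
        lt_of_le_of_ne hpre'.length_le (fun h => hne (hpre'.eq_of_length h))
      have : u'.length < Nat.find hex := hlen ▸ hlt
      exact Nat.find_min hex this ⟨u', rfl, hpre'.trans ⟨v, hv⟩, rEquiv_trans heq' hequ⟩
    · have hβw : β w = β u * β v := by rw [← hv, hβmul]
      have h1 : rEquiv (β u * β v) m := hβw ▸ hw
      have h2 : rEquiv (β u * β v) (β u) := rEquiv_trans h1 (rEquiv_symm hequ)
      have h3 : rLe m (m * β v) :=
        transfer n hidem hDA (rEquiv_symm hequ) h2.2
      exact Set.mem_setOf_eq ▸ (⟨⟨β v, rfl⟩, h3⟩ : rEquiv (m * β v) m)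
  · rintro ⟨p, hpm, u, ⟨hup, -⟩, v, hvU, rfl⟩
    rw [hβmul, hup]
    have hvU' : rEquiv (m * β v) m := hvU
    constructor
    · obtain ⟨a, ha⟩ := hpm.1
      exact ⟨a * β v, by rw [ha, mul_assoc]⟩
    · obtain ⟨z, hz⟩ := transfer n hidem hDA hpm hvU'.2
      obtain ⟨b, hb⟩ := hpm.2
      refine ⟨z * b, ?_⟩
      rw [hb]
      nth_rewrite 1 [hz]
      simp [mul_assoc]
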